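/- Let D be a finite set of points in ℝ² whose pairwise Euclidean distances are all at least 2, let L = lift(D), let B be the set of blocking points, and let P = L ∪ B; suppose L and B are disjoint, and let m be a natural number. Then D contains an independent set of size m if and only if there exists a subset S ⊆ P with |S| = m + |B| that is in convex position. -/

import Mathlib

/-!
Write `f_a p = p₃ - 2 ⟪a, (p₁, p₂)⟫`, so that `f_a (lift d) = ‖d - a‖² - ‖a‖²`; since `f_a` is
linear, its value at a blocking point is the mean of its values at the two lifted centres.

If `I` is independent, `S = lift I ∪ B` is in convex position: `f_c` attains its minimum over
`L ∪ B` only at `lift c`; for a touching pair `c, c'` with `c' ∉ I`, the sum `f_c + f_c'` attains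
its minimum over `L ∪ B` only at `lift c`, `lift c'` and their blocking point `b` (no other centre
is at distance `2` from both), hence over `S \ {b}` only at `lift c ≠ b`, which keeps `b` out of
the hull. The same minimum shows that a blocking point determines its touching pair.

Conversely, a set in convex position contains no midpoint of two of its points, so `S` misses the
blocking points of all touching pairs inside `J = {c | lift c ∈ S}`. Counting gives
`m + #(pairs in J) ≤ |J|`, and deleting one centre of each pair leaves an independent set.
-/

/-- The standard lifting map to the elliptic paraboloid: `(x₁, x₂) ↦ (x₁, x₂, x₁² + x₂²)`. -/
noncomputable def lift (x : EuclideanSpace ℝ (Fin 2)) : EuclideanSpace ℝ (Fin 3) :=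
  (WithLp.equiv 2 (Fin 3 → ℝ)).symm ![x 0, x 1, x 0 ^ 2 + x 1 ^ 2]

/-- The set of blocking points of `D`: midpoints `(lift c + lift c')/2` over all touching
pairs `c, c' ∈ D` (i.e. pairs with `dist c c' = 2`). -/
noncomputable def blockers (D : Set (EuclideanSpace ℝ (Fin 2))) :
    Set (EuclideanSpace ℝ (Fin 3)) :=
  {b | ∃ c ∈ D, ∃ c' ∈ D, dist c c' = 2 ∧ b = (1 / 2 : ℝ) • (lift c + lift c')}

open Set

section ConvexHull

variable {𝕜 E : Type*} [Field 𝕜] [LinearOrder 𝕜] [IsStrictOrderedRing 𝕜] [AddCommGroup E]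
  [Module 𝕜 E]

theorem mem_convexHull_sep_apply_eq (l : E →ₗ[𝕜] 𝕜) {s : Set E} {x : E}
    (hx : x ∈ convexHull 𝕜 s) (hs : ∀ y ∈ s, l x ≤ l y) :
    x ∈ convexHull 𝕜 {y ∈ s | l y = l x} := by
  set K := convexHull 𝕜 {y ∈ s | l y = l x}
  -- `l` can be minimal at an interior point of a segment only if it is minimal at both ends.
  have hC : Convex 𝕜 {y | l x ≤ l y ∧ (l y = l x → y ∈ K)} := by
    refine convex_iff_forall_pos.2 fun y hy z hz a b ha hb hab => ?_
    have hlx : l x = a * l x + b * l x := by rw [← add_mul, hab, one_mul]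
    have hly := mul_le_mul_of_nonneg_left hy.1 ha.le
    have hlz := mul_le_mul_of_nonneg_left hz.1 hb.le
    simp only [mem_ofPred_eq, map_add, map_smul, smul_eq_mul]
    refine ⟨by linarith, fun heq => convex_convexHull 𝕜 _ (hy.2 ?_) (hz.2 ?_) ha.le hb.le hab⟩
    · exact le_antisymm ((mul_le_mul_iff_of_pos_left ha).1 (by linarith)) hy.1
    · exact le_antisymm ((mul_le_mul_iff_of_pos_left hb).1 (by linarith)) hz.1
  have hsC : s ⊆ {y | l x ≤ l y ∧ (l y = l x → y ∈ K)} :=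
    fun y hy => ⟨hs y hy, fun h => subset_convexHull 𝕜 _ ⟨hy, h⟩⟩
  exact (convexHull_min hsC hC hx).2 rfl

theorem notMem_convexHull_of_forall_lt (l : E →ₗ[𝕜] 𝕜) {s : Set E} {x : E}
    (hs : ∀ y ∈ s, l x < l y) : x ∉ convexHull 𝕜 s := by
  intro hx
  have hempty : {y ∈ s | l y = l x} = ∅ :=
    eq_empty_of_forall_notMem fun y hy => (hs y hy.1).ne' hy.2
  simpa [hempty] using mem_convexHull_sep_apply_eq l hx fun y hy => (hs y hy).le

end ConvexHull

/-- Delete one endpoint of one edge per label; by `hf` it lies on every edge with that label. -/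
theorem exists_independent_subset_of_edge_labels {α β : Type*} {J : Set α} (hJ : J.Finite)
    (r : α → α → Prop) (f : α → α → β)
    (hf : ∀ p ∈ J, ∀ q ∈ J, ∀ c ∈ J, ∀ c' ∈ J, r p q → r c c' → f c c' = f p q → c = p ∨ c = q) :
    ∃ I ⊆ J, (∀ p ∈ I, ∀ q ∈ I, ¬ r p q) ∧
      J.ncard ≤ I.ncard + {b | ∃ p ∈ J, ∃ q ∈ J, r p q ∧ b = f p q}.ncard := by
  set E := {e : α × α | e.1 ∈ J ∧ e.2 ∈ J ∧ r e.1 e.2}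
  have hE : E.Finite := (hJ.prod hJ).subset fun e he => ⟨he.1, he.2.1⟩
  obtain ⟨E', hE'E, hbij⟩ := exists_subset_bijOn E fun e => f e.1 e.2
  have hlabels : (fun e : α × α => f e.1 e.2) '' E = {b | ∃ p ∈ J, ∃ q ∈ J, r p q ∧ b = f p q} := by
    ext b
    constructor
    · rintro ⟨⟨p, q⟩, ⟨hp, hq, hpq⟩, rfl⟩
      exact ⟨p, hp, q, hq, hpq, rfl⟩
    · rintro ⟨p, hp, q, hq, hpq, rfl⟩
      exact ⟨(p, q), ⟨hp, hq, hpq⟩, rfl⟩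
  refine ⟨J \ Prod.fst '' E', sdiff_subset, fun p hp q hq hpq => ?_, ?_⟩
  · obtain ⟨e, he, hfe⟩ := hbij.surjOn ⟨(p, q), ⟨hp.1, hq.1, hpq⟩, rfl⟩
    obtain ⟨hc, hc', hr⟩ := hE'E he
    rcases hf p hp.1 q hq.1 e.1 hc e.2 hc' hpq hr hfe with h | h
    · exact hp.2 ⟨e, he, h⟩
    · exact hq.2 ⟨e, he, h⟩
  · rw [← hlabels, ← hbij.image_eq, hbij.injOn.ncard_image]
    calc J.ncard ≤ (J \ Prod.fst '' E').ncard + (Prod.fst '' E').ncard :=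
          ncard_le_ncard_sdiff_add_ncard _ _ ((hE.subset hE'E).image _)
      _ ≤ (J \ Prod.fst '' E').ncard + E'.ncard := by
          gcongr
          exact ncard_image_le (hE.subset hE'E)

local notation "ℝ²" => EuclideanSpace ℝ (Fin 2)
local notation "ℝ³" => EuclideanSpace ℝ (Fin 3)

theorem lift_injective : Function.Injective lift := fun x y h => by
  ext i
  fin_cases i
  · exact congrArg (· 0) h
  · exact congrArg (· 1) h

/-- Its level sets are the planes parallel to the tangent plane of the paraboloid at `lift a`. -/
noncomputable def paraboloidFunctional (a : ℝ²) : ℝ³ →ₗ[ℝ] ℝ where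
  toFun p := p 2 - 2 * (a 0 * p 0 + a 1 * p 1)
  map_add' p q := by simp only [PiLp.add_apply]; ring
  map_smul' r p := by simp only [PiLp.smul_apply, smul_eq_mul, RingHom.id_apply]; ring

theorem paraboloidFunctional_lift (a d : ℝ²) :
    paraboloidFunctional a (lift d) = dist d a ^ 2 - (a 0 ^ 2 + a 1 ^ 2) := by
  rw [PiLp.dist_sq_eq_of_L2, Fin.sum_univ_two, Real.dist_eq, Real.dist_eq, sq_abs, sq_abs]
  change d 0 ^ 2 + d 1 ^ 2 - 2 * (a 0 * d 0 + a 1 * d 1) = _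
  ring

noncomputable def blocker (c c' : ℝ²) : ℝ³ := (1 / 2 : ℝ) • (lift c + lift c')

theorem mem_blockers {D : Set ℝ²} {b : ℝ³} :
    b ∈ blockers D ↔ ∃ c ∈ D, ∃ c' ∈ D, dist c c' = 2 ∧ b = blocker c c' :=
  Iff.rfl

theorem blocker_comm (c c' : ℝ²) : blocker c c' = blocker c' c := by
  rw [blocker, blocker, add_comm]

theorem map_blocker (l : ℝ³ →ₗ[ℝ] ℝ) (c c' : ℝ²) :
    l (blocker c c') = (l (lift c) + l (lift c')) / 2 := by
  rw [blocker, map_smul, map_add, smul_eq_mul]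
  ring

theorem blocker_mem_convexHull {s : Set ℝ³} {c c' : ℝ²} (hc : lift c ∈ s) (hc' : lift c' ∈ s) :
    blocker c c' ∈ convexHull ℝ s :=
  segment_subset_convexHull hc hc' ⟨1 / 2, 1 / 2, by norm_num, by norm_num, by norm_num,
    by rw [blocker, smul_add]⟩

theorem blockers_mono : Monotone blockers := by
  rintro D D' hDD' b ⟨c, hc, c', hc', hcc', rfl⟩
  exact ⟨c, hDD' hc, c', hDD' hc', hcc', rfl⟩

theorem blockers_finite {D : Set ℝ²} (hD : D.Finite) : (blockers D).Finite := by
  refine ((hD.prod hD).image fun e => blocker e.1 e.2).subset ?_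
  rintro _ ⟨c, hc, c', hc', -, rfl⟩
  exact ⟨(c, c'), ⟨hc, hc'⟩, rfl⟩

theorem lift_notMem_convexHull (D : Set ℝ²) (c : ℝ²) :
    lift c ∉ convexHull ℝ ((lift '' D ∪ blockers D) \ {lift c}) := by
  set l := paraboloidFunctional c
  have hlt : ∀ d ≠ c, l (lift c) < l (lift d) := fun d hd => by
    simp only [l, paraboloidFunctional_lift, dist_self]
    have := dist_pos.2 hd
    gcongr
  have hle : ∀ d, l (lift c) ≤ l (lift d) := fun d => by
    rcases eq_or_ne d c with rfl | hd
    exacts [le_rfl, (hlt d hd).le]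
  refine notMem_convexHull_of_forall_lt l ?_
  rintro y ⟨⟨d, -, rfl⟩ | hy, hyc⟩
  · exact hlt d fun h => hyc (h ▸ rfl)
  · obtain ⟨e, -, e', -, hee', rfl⟩ := mem_blockers.1 hy
    have hne : e ≠ e' := dist_ne_zero.1 (by rw [hee']; norm_num)
    rw [map_blocker]
    rcases eq_or_ne e c with rfl | hec
    · linarith [hlt e' hne.symm]
    · linarith [hlt e hec, hle e']

noncomputable def chordFunctional (c c' : ℝ²) : ℝ³ →ₗ[ℝ] ℝ :=
  paraboloidFunctional c + paraboloidFunctional c'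

theorem chordFunctional_lift (c c' d : ℝ²) :
    chordFunctional c c' (lift d) =
      dist d c ^ 2 + dist d c' ^ 2 - (c 0 ^ 2 + c 1 ^ 2 + (c' 0 ^ 2 + c' 1 ^ 2)) := by
  rw [chordFunctional, LinearMap.add_apply, paraboloidFunctional_lift, paraboloidFunctional_lift]
  ring

theorem chordFunctional_lift_right (c c' : ℝ²) :
    chordFunctional c c' (lift c') = chordFunctional c c' (lift c) := by
  rw [chordFunctional_lift, chordFunctional_lift, dist_self, dist_self, dist_comm]
  ring

theorem chordFunctional_blocker (c c' : ℝ²) :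
    chordFunctional c c' (blocker c c') = chordFunctional c c' (lift c) := by
  rw [map_blocker, chordFunctional_lift_right]
  ring

section Touching

variable {D : Set ℝ²} {c c' d : ℝ²}

theorem chordFunctional_lift_le (hsep : ∀ p ∈ D, ∀ q ∈ D, p ≠ q → 2 ≤ dist p q) (hc : c ∈ D)
    (hc' : c' ∈ D) (hcc' : dist c c' = 2) (hd : d ∈ D) :
    chordFunctional c c' (lift c) ≤ chordFunctional c c' (lift d) ∧
      (chordFunctional c c' (lift d) ≤ chordFunctional c c' (lift c) → d = c ∨ d = c') := by
  rw [chordFunctional_lift, chordFunctional_lift, dist_self, hcc']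
  by_cases hdc : d = c
  · subst hdc
    simp [hcc']
  by_cases hdc' : d = c'
  · subst hdc'
    simp [dist_comm d c, hcc']
  have h1 := hsep d hd c hc hdc
  have h2 := hsep d hd c' hc' hdc'
  refine ⟨by nlinarith, fun h => ?_⟩
  nlinarith

theorem mem_pair_of_chordFunctional_blocker_le
    (hsep : ∀ p ∈ D, ∀ q ∈ D, p ≠ q → 2 ≤ dist p q) (hc : c ∈ D) (hc' : c' ∈ D)
    (hcc' : dist c c' = 2) {e e' : ℝ²} (he : e ∈ D) (he' : e' ∈ D)
    (h : chordFunctional c c' (blocker e e') ≤ chordFunctional c c' (lift c)) :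
    (e = c ∨ e = c') ∧ (e' = c ∨ e' = c') := by
  have hmin := chordFunctional_lift_le hsep hc hc' hcc' he
  have hmin' := chordFunctional_lift_le hsep hc hc' hcc' he'
  rw [map_blocker] at h
  exact ⟨hmin.2 (by linarith [hmin'.1]), hmin'.2 (by linarith [hmin.1])⟩

theorem eq_or_eq_of_blocker_eq (hsep : ∀ p ∈ D, ∀ q ∈ D, p ≠ q → 2 ≤ dist p q) (hc : c ∈ D)
    (hc' : c' ∈ D) (hcc' : dist c c' = 2) {e e' : ℝ²} (he : e ∈ D) (he' : e' ∈ D)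
    (h : blocker e e' = blocker c c') : e = c ∨ e = c' :=
  (mem_pair_of_chordFunctional_blocker_le hsep hc hc' hcc' he he'
    (by rw [h, chordFunctional_blocker])).1

theorem blocker_notMem_convexHull (hsep : ∀ p ∈ D, ∀ q ∈ D, p ≠ q → 2 ≤ dist p q)
    (hdisj : Disjoint (lift '' D) (blockers D)) {I : Set ℝ²} (hI : I ⊆ D) (hc : c ∈ D)
    (hc' : c' ∈ D) (hcc' : dist c c' = 2) (hc'I : c' ∉ I) :
    blocker c c' ∉ convexHull ℝ ((lift '' I ∪ blockers D) \ {blocker c c'}) := by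
  set l := chordFunctional c c'
  have hface : ∀ y ∈ (lift '' I ∪ blockers D) \ {blocker c c'},
      l (blocker c c') ≤ l y ∧ (l y = l (blocker c c') → y = lift c) := by
    rw [chordFunctional_blocker]
    rintro y ⟨⟨d, hd, rfl⟩ | hy, hyb⟩
    · have hmin := chordFunctional_lift_le hsep hc hc' hcc' (hI hd)
      refine ⟨hmin.1, fun h => ?_⟩
      rcases hmin.2 h.le with rfl | rfl
      exacts [rfl, absurd hd hc'I]
    · obtain ⟨e, he, e', he', hee', rfl⟩ := mem_blockers.1 hy
      have hmin := chordFunctional_lift_le hsep hc hc' hcc' he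
      have hmin' := chordFunctional_lift_le hsep hc hc' hcc' he'
      refine ⟨by rw [map_blocker]; linarith [hmin.1, hmin'.1], fun h => absurd ?_ hyb⟩
      obtain ⟨rfl | rfl, rfl | rfl⟩ :=
        mem_pair_of_chordFunctional_blocker_le hsep hc hc' hcc' he he' h.le
      · norm_num at hee'
      · rfl
      · exact blocker_comm _ _
      · norm_num at hee'
  intro hb
  have hb' := convexHull_mono (t := {lift c}) (fun y hy => hface y hy.1 |>.2 hy.2)
    (mem_convexHull_sep_apply_eq l hb fun y hy => (hface y hy).1)
  rw [convexHull_singleton] at hb'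
  exact hdisj.ne_of_mem ⟨c, hc, rfl⟩ ⟨c, hc, c', hc', hcc', rfl⟩ hb'.symm

end Touching

theorem convexPosition_lift_union_blockers {D I : Set ℝ²}
    (hsep : ∀ p ∈ D, ∀ q ∈ D, p ≠ q → 2 ≤ dist p q) (hdisj : Disjoint (lift '' D) (blockers D))
    (hI : I ⊆ D) (hind : ∀ p ∈ I, ∀ q ∈ I, p ≠ q → 2 < dist p q) :
    ∀ p ∈ lift '' I ∪ blockers D, p ∉ convexHull ℝ ((lift '' I ∪ blockers D) \ {p}) := by
  rintro p (⟨c, -, rfl⟩ | hp)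
  · exact fun h => lift_notMem_convexHull D c <|
      convexHull_mono (sdiff_subset_sdiff_left (union_subset_union_left _ (image_mono hI))) h
  · obtain ⟨c, hc, c', hc', hcc', rfl⟩ := mem_blockers.1 hp
    by_cases hc'I : c' ∈ I
    · have hcI : c ∉ I := fun hcI =>
        (hind c hcI c' hc'I (dist_ne_zero.1 (by rw [hcc']; norm_num))).ne' hcc'
      rw [blocker_comm]
      exact blocker_notMem_convexHull hsep hdisj hI hc' hc (by rwa [dist_comm]) hcI
    · exact blocker_notMem_convexHull hsep hdisj hI hc hc' hcc' hc'I

theorem blocker_notMem_of_convexPosition {S : Set ℝ³}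
    (hS : ∀ p ∈ S, p ∉ convexHull ℝ (S \ {p})) {c c' : ℝ²} (hc : lift c ∈ S)
    (hc' : lift c' ∈ S) (hne : lift c ≠ blocker c c') (hne' : lift c' ≠ blocker c c') :
    blocker c c' ∉ S :=
  fun hb => hS _ hb (blocker_mem_convexHull ⟨hc, hne⟩ ⟨hc', hne'⟩)

theorem ncard_add_ncard_blockers_le {D : Set ℝ²} (hD : D.Finite)
    (hdisj : Disjoint (lift '' D) (blockers D)) {S : Set ℝ³} (hSP : S ⊆ lift '' D ∪ blockers D)
    (hS : ∀ p ∈ S, p ∉ convexHull ℝ (S \ {p})) :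
    S.ncard + (blockers {c ∈ D | lift c ∈ S}).ncard ≤
      {c ∈ D | lift c ∈ S}.ncard + (blockers D).ncard := by
  set J := {c ∈ D | lift c ∈ S}
  have hB := blockers_finite hD
  have hsplit : S = lift '' J ∪ (S ∩ blockers D) := by
    ext x
    constructor
    · intro hx
      rcases hSP hx with ⟨c, hc, rfl⟩ | hxB
      exacts [Or.inl ⟨c, ⟨hc, hx⟩, rfl⟩, Or.inr ⟨hx, hxB⟩]
    · rintro (⟨c, ⟨-, hc⟩, rfl⟩ | ⟨hx, -⟩)
      exacts [hc, hx]
  have hJS : S.ncard = J.ncard + (S ∩ blockers D).ncard := by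
    rw [← ncard_image_of_injective J lift_injective, ← ncard_union_eq
      (hdisj.mono (image_mono (sep_subset D _)) inter_subset_right)
      ((hD.subset (sep_subset D _)).image lift) (hB.subset inter_subset_right), ← hsplit]
  have hJB : Disjoint (S ∩ blockers D) (blockers J) := by
    refine disjoint_right.2 fun b hb hbS => ?_
    obtain ⟨c, ⟨hcD, hcS⟩, c', ⟨hc'D, hc'S⟩, hcc', rfl⟩ := mem_blockers.1 hb
    refine blocker_notMem_of_convexPosition hS hcS hc'S ?_ ?_ hbS.1 <;>
      exact hdisj.ne_of_mem (mem_image_of_mem lift ‹_›) hbS.2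
  have hBJ : blockers J ⊆ blockers D := blockers_mono (sep_subset D _)
  have hB' : (S ∩ blockers D).ncard + (blockers J).ncard ≤ (blockers D).ncard := by
    rw [← ncard_union_eq hJB (hB.subset inter_subset_right) (hB.subset hBJ)]
    exact ncard_le_ncard (union_subset inter_subset_right hBJ) hB
  omega

/-- Let `D ⊆ ℝ²` be finite with pairwise distances at least `2`, let
`L = lift '' D`, `B` the blocking points, `P = L ∪ B`, with `L` and `B` disjoint, and let
`m : ℕ`. Then `D` contains an independent set of size `m` iff there exists `S ⊆ P` with
`|S| = m + |B|` in convex position. -/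
theorem independent_set_iff_convex_set (D : Set (EuclideanSpace ℝ (Fin 2)))
    (hD : D.Finite) (hsep : ∀ p ∈ D, ∀ q ∈ D, p ≠ q → 2 ≤ dist p q)
    (hdisj : Disjoint (lift '' D) (blockers D)) (m : ℕ) :
    (∃ I ⊆ D, (∀ p ∈ I, ∀ q ∈ I, p ≠ q → 2 < dist p q) ∧ I.ncard = m) ↔
      ∃ S ⊆ lift '' D ∪ blockers D, S.ncard = m + (blockers D).ncard ∧
        ∀ p ∈ S, p ∉ convexHull ℝ (S \ {p}) := by
  constructor
  · rintro ⟨I, hID, hI, rfl⟩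
    refine ⟨lift '' I ∪ blockers D, union_subset_union_left _ (image_mono hID), ?_,
      convexPosition_lift_union_blockers hsep hdisj hID hI⟩
    rw [ncard_union_eq (hdisj.mono_left (image_mono hID)) ((hD.subset hID).image lift)
      (blockers_finite hD), ncard_image_of_injective I lift_injective]
  · rintro ⟨S, hSP, hcard, hS⟩
    set J := {c ∈ D | lift c ∈ S}
    have hJD : J ⊆ D := sep_subset D _
    obtain ⟨I, hIJ, hI, hJI⟩ : ∃ I ⊆ J, (∀ p ∈ I, ∀ q ∈ I, ¬ dist p q = 2) ∧
        J.ncard ≤ I.ncard + (blockers J).ncard :=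
      exists_independent_subset_of_edge_labels (hD.subset hJD) _ blocker
        fun p hp q hq c hc c' hc' hpq _ h =>
          eq_or_eq_of_blocker_eq hsep (hJD hp) (hJD hq) hpq (hJD hc) (hJD hc') h
    have hcount : S.ncard + (blockers J).ncard ≤ J.ncard + (blockers D).ncard :=
      ncard_add_ncard_blockers_le hD hdisj hSP hS
    obtain ⟨I', hI'I, hI'⟩ := exists_subset_card_eq (show m ≤ I.ncard by omega)
    refine ⟨I', hI'I.trans (hIJ.trans hJD), fun p hp q hq hpq => ?_, hI'⟩
    exact (hsep p (hJD (hIJ (hI'I hp))) q (hJD (hIJ (hI'I hq))) hpq).lt_of_ne'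
      (hI p (hI'I hp) q (hI'I hq))
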